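/- arXiv:2011.05942 — 2 statements merged into one kernel-verified Lean document; each statement's English description precedes it below -/
import Mathlib

section
/- Let (ψ, ψ_2, …, ψ_K) be an orthonormal family of vectors in ℂ^d, let λ ∈ (0,1], and let p_2, …, p_K be nonnegative reals with ∑_k p_k = 1. Define ρ = λ·|ψ⟩⟨ψ| + (1−λ)·∑_{k=2}^K p_k·|ψ_k⟩⟨ψ_k|, and let σ be a d×d complex matrix whose operator norm satisfies ‖σ‖ ≤ 1. Then for every n ≥ 1: |Tr[ρ^n σ]/Tr[ρ^n] − ⟨ψ, σψ⟩| ≤ 2Q_n/(1 + Q_n), where Q_n := ((1−λ)/λ)^n · ∑_{k=2}^K p_k^n. -/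
open Matrix BigOperators

/-!
In the orthonormal basis `ψ, ψ_k` the state is diagonal, so
`ρ^n = λ^n |ψ⟩⟨ψ| + ∑_k ((1-λ) p_k)^n |ψ_k⟩⟨ψ_k|`. Hence `Tr[ρ^n σ] / Tr[ρ^n]` is a weighted
average of the diagonal entries `⟨ψ_i, σ ψ_i⟩`, all of modulus at most `‖σ‖ ≤ 1`; it differs
from `⟨ψ, σ ψ⟩` by at most twice the weight carried by the `ψ_k`, which is `Q_n / (1 + Q_n)`.
-/

theorem trace_sum_smul_vecMulVec_mul {R ι n : Type*} [CommSemiring R] [Fintype ι] [Fintype n]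
    (u v : ι → n → R) (w : ι → R) (σ : Matrix n n R) :
    ((∑ i, w i • vecMulVec (u i) (v i)) * σ).trace = ∑ i, w i * (v i ⬝ᵥ σ *ᵥ u i) := by
  simp only [Finset.sum_mul, smul_mul_assoc, trace_sum, trace_smul, vecMulVec_mul,
    trace_vecMulVec, smul_eq_mul, dotProduct_comm (u _), dotProduct_mulVec]

section RankOneSum

variable {R ι n : Type*} [CommSemiring R] [StarRing R] [Fintype ι] [DecidableEq ι] [Fintype n]
  [DecidableEq n] {v : ι → n → R}

theorem sum_smul_vecMulVec_mul_sum_smul_vecMulVec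
    (hv : ∀ i j, star (v i) ⬝ᵥ v j = if i = j then 1 else 0) (a b : ι → R) :
    (∑ i, a i • vecMulVec (v i) (star (v i))) * (∑ j, b j • vecMulVec (v j) (star (v j))) =
      ∑ i, (a i * b i) • vecMulVec (v i) (star (v i)) := by
  simp only [Finset.sum_mul_sum, smul_mul_smul_comm, vecMulVec_mul_vecMulVec, hv, ite_smul,
    one_smul, zero_smul, apply_ite (vecMulVec _), vecMulVec_zero, smul_ite, smul_zero,
    Finset.sum_ite_eq, Finset.mem_univ, if_true]

theorem sum_smul_vecMulVec_pow
    (hv : ∀ i j, star (v i) ⬝ᵥ v j = if i = j then 1 else 0) (w : ι → R) {m : ℕ} (hm : m ≠ 0) :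
    (∑ i, w i • vecMulVec (v i) (star (v i))) ^ m =
      ∑ i, w i ^ m • vecMulVec (v i) (star (v i)) := by
  induction m with
  | zero => exact absurd rfl hm
  | succ m ih =>
    rcases eq_or_ne m 0 with rfl | hm
    · simp
    · rw [pow_succ, ih hm, sum_smul_vecMulVec_mul_sum_smul_vecMulVec hv]
      simp only [pow_succ]

end RankOneSum

theorem star_option_elim_dotProduct_option_elim {R ι n : Type*} [CommSemiring R] [StarRing R]
    [DecidableEq ι] [Fintype n] {u : n → R} {v : ι → n → R}
    (hu : star u ⬝ᵥ u = 1) (huv : ∀ i, star u ⬝ᵥ v i = 0)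
    (hv : ∀ i j, star (v i) ⬝ᵥ v j = if i = j then 1 else 0) (i j : Option ι) :
    star (i.elim u v) ⬝ᵥ j.elim u v = if i = j then 1 else 0 := by
  have hvu : ∀ i, star (v i) ⬝ᵥ u = 0 := fun i => by
    rw [← star_eq_zero, star_dotProduct, star_star, huv]
  rcases i with _ | i <;> rcases j with _ | j <;> simp [hu, huv, hvu, hv]

theorem norm_star_dotProduct_mulVec_le {n : Type*} [Fintype n] [DecidableEq n]
    (σ : Matrix n n ℂ) {u : n → ℂ} (hu : star u ⬝ᵥ u = 1) :
    ‖star u ⬝ᵥ σ *ᵥ u‖ ≤ ‖Matrix.toEuclideanCLM (𝕜 := ℂ) σ‖ := by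
  have hx : ‖WithLp.toLp 2 u‖ = 1 := by
    rw [norm_eq_sqrt_re_inner (𝕜 := ℂ), EuclideanSpace.inner_toLp_toLp, dotProduct_comm, hu]
    simp
  calc ‖star u ⬝ᵥ σ *ᵥ u‖
      = ‖inner ℂ (WithLp.toLp 2 u) (Matrix.toEuclideanCLM (𝕜 := ℂ) σ (WithLp.toLp 2 u))‖ := by
        rw [dotProduct_comm]; rfl
    _ ≤ ‖WithLp.toLp 2 u‖ * ‖Matrix.toEuclideanCLM (𝕜 := ℂ) σ (WithLp.toLp 2 u)‖ :=
        norm_inner_le_norm _ _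
    _ ≤ ‖Matrix.toEuclideanCLM (𝕜 := ℂ) σ‖ := by
        rw [hx, one_mul]; exact ContinuousLinearMap.unit_le_opNorm _ _ hx.le

theorem norm_weighted_average_sub_le {ι : Type*} [Fintype ι] {a : ℝ} {b : ι → ℝ} (ha : 0 < a)
    (hb : ∀ i, 0 ≤ b i) {z : ℂ} {y : ι → ℂ} (hz : ‖z‖ ≤ 1) (hy : ∀ i, ‖y i‖ ≤ 1) :
    ‖(a * z + ∑ i, b i * y i) / (a + ∑ i, b i : ℝ) - z‖ ≤ 2 * (∑ i, b i) / (a + ∑ i, b i) := by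
  have hB : 0 ≤ ∑ i, b i := Finset.sum_nonneg fun i _ => hb i
  have hpos : 0 < a + ∑ i, b i := by positivity
  have hdiff : (a * z + ∑ i, b i * y i) / (a + ∑ i, b i : ℝ) - z =
      (∑ i, b i * (y i - z)) / (a + ∑ i, b i : ℝ) := by
    have : ((a + ∑ i, b i : ℝ) : ℂ) ≠ 0 := by exact_mod_cast hpos.ne'
    field_simp
    push_cast
    simp only [mul_sub, Finset.sum_sub_distrib, ← Finset.sum_mul]
    ring
  have hnum : ‖∑ i, b i * (y i - z)‖ ≤ 2 * ∑ i, b i := by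
    calc ‖∑ i, b i * (y i - z)‖ ≤ ∑ i, ‖(b i : ℂ) * (y i - z)‖ := norm_sum_le _ _
      _ ≤ ∑ i, b i * 2 := Finset.sum_le_sum fun i _ => by
          rw [norm_mul, Complex.norm_real, Real.norm_of_nonneg (hb i)]
          gcongr
          · exact hb i
          · linarith [norm_sub_le (y i) z, hy i]
      _ = 2 * ∑ i, b i := by rw [Finset.mul_sum]; simp only [mul_comm]
  rw [hdiff, norm_div, Complex.norm_real, Real.norm_of_nonneg hpos.le]
  gcongr

theorem methodA_error_bound_general {d K : ℕ}
    (ψ : Fin d → ℂ) (ψe : Fin K → Fin d → ℂ)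
    (hψ : star ψ ⬝ᵥ ψ = 1)
    (horth : ∀ k, star ψ ⬝ᵥ ψe k = 0)
    (he : ∀ k l, star (ψe k) ⬝ᵥ ψe l = if k = l then 1 else 0)
    (lam : ℝ) (hlam : lam ∈ Set.Ioc (0 : ℝ) 1)
    (p : Fin K → ℝ) (hp : ∀ k, 0 ≤ p k)
    (σ : Matrix (Fin d) (Fin d) ℂ)
    (hσ : ‖Matrix.toEuclideanCLM (𝕜 := ℂ) σ‖ ≤ 1)
    (n : ℕ) (hn : 1 ≤ n) :
    let ρ : Matrix (Fin d) (Fin d) ℂ :=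
      (lam : ℂ) • vecMulVec ψ (star ψ) +
        ((1 : ℂ) - (lam : ℂ)) • ∑ k, (p k : ℂ) • vecMulVec (ψe k) (star (ψe k))
    let Qn : ℝ := ((1 - lam) / lam) ^ n * ∑ k, p k ^ n
    ‖(ρ ^ n * σ).trace / (ρ ^ n).trace - star ψ ⬝ᵥ σ.mulVec ψ‖
      ≤ 2 * Qn / (1 + Qn) := by
  intro ρ Qn
  obtain ⟨hlam0, hlam1⟩ := hlam
  let v : Option (Fin K) → Fin d → ℂ := fun i => i.elim ψ ψe
  let w : Option (Fin K) → ℂ := fun i => i.elim lam fun k => (1 - lam) * p k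
  have hv : ∀ i j, star (v i) ⬝ᵥ v j = if i = j then 1 else 0 :=
    star_option_elim_dotProduct_option_elim hψ horth he
  have hρ : ρ = ∑ i, w i • vecMulVec (v i) (star (v i)) := by
    simp only [ρ, v, w, Fintype.sum_option, Option.elim, Finset.smul_sum, smul_smul]
  have hunit : ∀ i, ‖star (v i) ⬝ᵥ σ *ᵥ v i‖ ≤ 1 := fun i =>
    (norm_star_dotProduct_mulVec_le σ (by simpa using hv i i)).trans hσ
  have htrace : ∀ M, (ρ ^ n * M).trace = ∑ i, w i ^ n * (star (v i) ⬝ᵥ M *ᵥ v i) := fun M => by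
    rw [hρ, sum_smul_vecMulVec_pow hv w (by omega), trace_sum_smul_vecMulVec_mul]
  have htrace_one : (ρ ^ n).trace = ∑ i, w i ^ n := by
    simpa [hv] using htrace 1
  set B := ∑ k, ((1 - lam) * p k) ^ n
  calc _ = ‖((lam ^ n : ℝ) * star ψ ⬝ᵥ σ *ᵥ ψ +
          ∑ k, (((1 - lam) * p k) ^ n : ℝ) * star (ψe k) ⬝ᵥ σ *ᵥ ψe k) /
          (lam ^ n + B : ℝ) - star ψ ⬝ᵥ σ *ᵥ ψ‖ := by
        rw [htrace, htrace_one]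
        simp only [Fintype.sum_option, v, w, Option.elim, B]
        push_cast
        rfl
    _ ≤ 2 * B / (lam ^ n + B) :=
        norm_weighted_average_sub_le (by positivity)
          (fun k => pow_nonneg (mul_nonneg (by linarith) (hp k)) n) (hunit none)
          (fun k => hunit (some k))
    _ = 2 * Qn / (1 + Qn) := by
        have hQn : Qn = B / lam ^ n := by
          simp only [Qn, B, mul_pow, ← Finset.mul_sum, div_pow]; ring
        rw [hQn]
        field_simp

/-- Method A error bound, paper's Theorem 2: for the noisy state
`ρ = λ|ψ⟩⟨ψ| + (1−λ)∑_k p_k |ψ_k⟩⟨ψ_k|` with `(ψ, ψ_2, …, ψ_K)` orthonormal,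
`λ ∈ (0,1]`, `p_k ≥ 0`, `∑_k p_k = 1`, and `σ` with operator norm `‖σ‖ ≤ 1`:
`|Tr[ρ^n σ]/Tr[ρ^n] − ⟨ψ, σψ⟩| ≤ 2Q_n/(1+Q_n)`, where `Q_n = ((1−λ)/λ)^n ∑_k p_k^n`. -/
theorem methodA_error_bound {d K : ℕ}
    (ψ : Fin d → ℂ) (ψe : Fin K → Fin d → ℂ)
    (hψ : star ψ ⬝ᵥ ψ = 1)
    (horth : ∀ k, star ψ ⬝ᵥ ψe k = 0)
    (he : ∀ k l, star (ψe k) ⬝ᵥ ψe l = if k = l then 1 else 0)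
    (lam : ℝ) (hlam : lam ∈ Set.Ioc (0 : ℝ) 1)
    (p : Fin K → ℝ) (hp : ∀ k, 0 ≤ p k) (hsum : ∑ k, p k = 1)
    (σ : Matrix (Fin d) (Fin d) ℂ)
    (hσ : ‖Matrix.toEuclideanCLM (𝕜 := ℂ) σ‖ ≤ 1)
    (n : ℕ) (hn : 1 ≤ n) :
    let ρ : Matrix (Fin d) (Fin d) ℂ :=
      (lam : ℂ) • vecMulVec ψ (star ψ) +
        ((1 : ℂ) - (lam : ℂ)) • ∑ k, (p k : ℂ) • vecMulVec (ψe k) (star (ψe k))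
    let Qn : ℝ := ((1 - lam) / lam) ^ n * ∑ k, p k ^ n
    ‖(ρ ^ n * σ).trace / (ρ ^ n).trace - star ψ ⬝ᵥ σ.mulVec ψ‖
      ≤ 2 * Qn / (1 + Qn) :=
  methodA_error_bound_general ψ ψe hψ horth he lam hlam p hp σ hσ n hn
end

section
/- Let n ≥ 2, let ψ ∈ ℂ^d be a unit vector, and for μ = 1, …, n let λ_μ ∈ [0,1] and let E_μ be a Hermitian positive-semidefinite d×d matrix with Tr[E_μ] = 1 and E_μ ψ = 0. Define ρ_μ = λ_μ·|ψ⟩⟨ψ| + (1−λ_μ)·E_μ. Then for every d×d complex matrix σ with operator norm ‖σ‖ ≤ 1: |Tr[(σ ⊗ Id^{⊗(n−1)}) · S_n · (ρ_1 ⊗ ρ_2 ⊗ ⋯ ⊗ ρ_n)] − (∏_{μ=1}^n λ_μ)·⟨ψ, σψ⟩| ≤ ∏_{μ=1}^n (1−λ_μ). -/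
open Matrix BigOperators ComplexOrder

/-- The `n`-fold tensor (Kronecker) product of `d × d` matrices, one per register. -/
noncomputable def tensPow {d n : ℕ} (A : Fin n → Matrix (Fin d) (Fin d) ℂ) :
    Matrix (Fin n → Fin d) (Fin n → Fin d) ℂ :=
  Matrix.of fun i j => ∏ μ, A μ (i μ) (j μ)

/-- The cyclic shift operator `S_n` on `(ℂ^d)^{⊗ n}`, determined by
`S_n (v_1 ⊗ v_2 ⊗ ⋯ ⊗ v_n) = v_n ⊗ v_1 ⊗ ⋯ ⊗ v_{n-1}`. -/
noncomputable def cyclicShift (d n : ℕ) [NeZero n] :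
    Matrix (Fin n → Fin d) (Fin n → Fin d) ℂ :=
  Matrix.of fun i j => if ∀ μ, i μ = j (μ - 1) then 1 else 0

/-!
Summing out the cyclic shift turns the trace into `Tr(ρₙ ⋯ ρ₂ ρ₁ σ)`. With `P = |ψ⟩⟨ψ|`, the
relations `P² = P` and `P E_μ = E_μ P = 0` kill every mixed term of the product, so
`ρₙ ⋯ ρ₁ = (∏ λ_μ) P + (∏ (1 - λ_μ)) Eₙ ⋯ E₁`. The first term contributes exactly
`(∏ λ_μ) ⟨ψ, σψ⟩`. In the second, `|Tr(X E₁)| ≤ ‖X‖ Tr E₁` for `X = σ Eₙ ⋯ E₂`, and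
`‖E_μ‖ ≤ Tr E_μ = 1` for positive semidefinite `E_μ`, so its trace has modulus at most `1`.
-/

theorem Fin.snoc_sub_one {α : Type*} {m : ℕ} (k : Fin m → α) (a : α) (i : Fin (m + 1)) :
    (Fin.snoc k a : Fin (m + 1) → α) (i - 1) = (Fin.cons a k : Fin (m + 1) → α) i := by
  rw [Fin.snoc_eq_cons_rotate]
  simp

theorem List.prod_reverse_ofFn_mul {M : Type*} [Monoid M] {m : ℕ} (f g : Fin (m + 1) → M)
    (hg : ∀ i, i ≠ 0 → g i = 1) :
    (List.ofFn fun i => f i * g i).reverse.prod = (List.ofFn f).reverse.prod * g 0 := by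
  simp [List.ofFn_succ, hg, Fin.succ_ne_zero, mul_assoc]

theorem norm_mul_list_prod_le {R : Type*} [SeminormedRing R] (X : R) {l : List R}
    (hl : ∀ a ∈ l, ‖a‖ ≤ 1) : ‖X * l.prod‖ ≤ ‖X‖ := by
  induction l generalizing X with
  | nil => rw [List.prod_nil, mul_one]
  | cons a l ih =>
    rw [List.prod_cons, ← mul_assoc]
    refine (ih _ fun b hb => hl b (List.mem_cons_of_mem a hb)).trans ?_
    exact (norm_mul_le X a).trans (mul_le_of_le_one_right (norm_nonneg X) (hl a List.mem_cons_self))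

section Orthogonal

variable {ι S R : Type*} [CommSemiring S] [Semiring R] [Module S R] [IsScalarTower S R R]
  [SMulCommClass S R R] {P : R} {E : ι → R}

theorem mul_list_prod_map_eq_zero (hPE : ∀ i, P * E i = 0) {l : List ι} (hl : l ≠ []) :
    P * (l.map E).prod = 0 := by
  obtain ⟨i, t, rfl⟩ := List.exists_cons_of_ne_nil hl
  rw [List.map_cons, List.prod_cons, ← mul_assoc, hPE, zero_mul]

theorem list_prod_map_smul_add_smul (hP : P * P = P) (hPE : ∀ i, P * E i = 0)
    (hEP : ∀ i, E i * P = 0) (a b : ι → S) {l : List ι} (hl : l ≠ []) :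
    (l.map fun i => a i • P + b i • E i).prod =
      (l.map a).prod • P + (l.map b).prod • (l.map E).prod := by
  induction l with
  | nil => exact absurd rfl hl
  | cons i t ih =>
    rcases eq_or_ne t [] with rfl | ht
    · simp
    rw [List.map_cons, List.prod_cons, ih ht]
    simp only [add_mul, mul_add, smul_mul_smul_comm, hP, hEP, mul_list_prod_map_eq_zero hPE ht,
      smul_zero, add_zero, zero_add, List.map_cons, List.prod_cons, mul_smul]

end Orthogonal

namespace Matrix

section ChainSum

variable {ι R : Type*} [Fintype ι] [DecidableEq ι] [CommSemiring R]

theorem list_prod_ofFn_apply {m : ℕ} (D : Fin (m + 1) → Matrix ι ι R) (a b : ι) :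
    (List.ofFn D).prod a b = ∑ k : Fin m → ι,
      ∏ i, D i ((Fin.cons a k : Fin (m + 1) → ι) i) ((Fin.snoc k b : Fin (m + 1) → ι) i) := by
  induction m generalizing a with
  | zero => simp [Fin.snoc]
  | succ m ih =>
    rw [List.ofFn_succ, List.prod_cons, mul_apply,
      ← (Fin.consEquiv fun _ => ι).sum_comp, Fintype.sum_prod_type]
    refine Finset.sum_congr rfl fun x _ => ?_
    simp only [Fin.consEquiv, Equiv.coe_fn_mk, ih, Finset.mul_sum,
      Fin.prod_univ_succ (n := m + 1), Fin.cons_zero, Fin.cons_succ, ← Fin.cons_snoc_eq_snoc_cons]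

theorem trace_list_prod_ofFn {m : ℕ} (D : Fin (m + 1) → Matrix ι ι R) :
    (List.ofFn D).prod.trace = ∑ g : Fin (m + 1) → ι, ∏ i, D i (g (i - 1)) (g i) := by
  rw [← (Fin.snocEquiv fun _ => ι).sum_comp, Fintype.sum_prod_type, trace]
  refine Finset.sum_congr rfl fun a _ => ?_
  simp only [diag_apply, list_prod_ofFn_apply, Fin.snocEquiv_apply, Fin.snoc_sub_one]

theorem sum_prod_apply_sub_one_eq_trace {n : ℕ} [NeZero n] (D : Fin n → Matrix ι ι R) :
    ∑ g : Fin n → ι, ∏ μ, D μ (g μ) (g (μ - 1)) = (List.ofFn D).reverse.prod.trace := by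
  obtain ⟨m, rfl⟩ := Nat.exists_eq_succ_of_ne_zero (NeZero.ne n)
  rw [← trace_transpose, transpose_list_prod, List.map_reverse, List.reverse_reverse,
    List.map_ofFn, trace_list_prod_ofFn]
  rfl

end ChainSum

section RankOne

variable {n R : Type*} [Fintype n] [CommSemiring R] [StarRing R] {ψ : n → R}

theorem vecMulVec_star_mul_self (hψ : star ψ ⬝ᵥ ψ = 1) :
    vecMulVec ψ (star ψ) * vecMulVec ψ (star ψ) = vecMulVec ψ (star ψ) := by
  rw [vecMulVec_mul_vecMulVec, hψ, one_smul]

theorem vecMulVec_star_mul_eq_zero {E : Matrix n n R} (hE : E.IsHermitian) (hEψ : E *ᵥ ψ = 0) :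
    vecMulVec ψ (star ψ) * E = 0 := by
  rw [vecMulVec_mul, ← hE.eq, ← star_mulVec, hEψ, star_zero, vecMulVec_zero]

theorem mul_vecMulVec_star_eq_zero {E : Matrix n n R} (hEψ : E *ᵥ ψ = 0) :
    E * vecMulVec ψ (star ψ) = 0 := by
  rw [mul_vecMulVec, hEψ, zero_vecMulVec]

theorem trace_vecMulVec_star_mul (σ : Matrix n n R) :
    (vecMulVec ψ (star ψ) * σ).trace = star ψ ⬝ᵥ σ *ᵥ ψ := by
  rw [vecMulVec_mul, trace_vecMulVec, dotProduct_mulVec, dotProduct_comm]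

end RankOne

section L2OpNorm

open scoped Norms.L2Operator

variable {𝕜 n : Type*} [RCLike 𝕜] [Fintype n] [DecidableEq n]

theorem norm_apply_le_l2_opNorm (M : Matrix n n 𝕜) (i j : n) : ‖M i j‖ ≤ ‖M‖ := by
  have h := M.l2_opNorm_mulVec (PiLp.single 2 j (1 : 𝕜))
  rw [PiLp.norm_single, norm_one, mul_one] at h
  refine le_trans (le_of_eq ?_) ((PiLp.norm_apply_le _ i).trans h)
  simp

theorem PosSemidef.exists_unitary_diagonal {F : Matrix n n 𝕜} (hF : F.PosSemidef) :
    ∃ (U : unitaryGroup n 𝕜) (ev : n → ℝ), (∀ i, 0 ≤ ev i) ∧ RCLike.re F.trace = ∑ i, ev i ∧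
      F = (U : Matrix n n 𝕜) * diagonal (RCLike.ofReal ∘ ev) * (star U : Matrix n n 𝕜) :=
  ⟨_, _, hF.eigenvalues_nonneg, by simp [hF.1.trace_eq_sum_eigenvalues], hF.1.spectral_theorem⟩

theorem PosSemidef.norm_trace_mul_le {F : Matrix n n 𝕜} (hF : F.PosSemidef) (X : Matrix n n 𝕜) :
    ‖(X * F).trace‖ ≤ ‖X‖ * RCLike.re F.trace := by
  obtain ⟨U, ev, hev, htr, rfl⟩ := hF.exists_unitary_diagonal
  set Y : Matrix n n 𝕜 := (star U : Matrix n n 𝕜) * X * U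
  have hY : ‖Y‖ = ‖X‖ := by
    rw [CStarRing.norm_mul_coe_unitary, ← Unitary.coe_star, CStarRing.norm_coe_unitary_mul]
  have htrace : (X * ((U : Matrix n n 𝕜) * diagonal (RCLike.ofReal ∘ ev) *
      (star U : Matrix n n 𝕜))).trace = ∑ i, Y i i * ev i := by
    rw [← mul_assoc, ← mul_assoc, trace_mul_cycle, ← mul_assoc]
    simp [trace, mul_diagonal, Y]
  rw [htrace, htr, Finset.mul_sum]
  refine (norm_sum_le _ _).trans (Finset.sum_le_sum fun i _ => ?_)
  rw [norm_mul, RCLike.norm_ofReal, abs_of_nonneg (hev i), ← hY]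
  exact mul_le_mul_of_nonneg_right (norm_apply_le_l2_opNorm Y i i) (hev i)

theorem PosSemidef.l2_opNorm_le_trace {F : Matrix n n 𝕜} (hF : F.PosSemidef) :
    ‖F‖ ≤ RCLike.re F.trace := by
  obtain ⟨U, ev, hev, htr, rfl⟩ := hF.exists_unitary_diagonal
  rw [htr, ← Unitary.coe_star, CStarRing.norm_mul_coe_unitary, CStarRing.norm_coe_unitary_mul,
    l2_opNorm_diagonal]
  refine (pi_norm_le_iff_of_nonneg (Finset.sum_nonneg fun i _ => hev i)).2 fun i => ?_
  rw [Function.comp_apply, RCLike.norm_ofReal, abs_of_nonneg (hev i)]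
  exact Finset.single_le_sum (fun j _ => hev j) (Finset.mem_univ i)

theorem norm_trace_list_prod_mul_le_one {m : ℕ} {E : Fin (m + 1) → Matrix n n 𝕜}
    (hE : ∀ μ, (E μ).PosSemidef) (hEtr : ∀ μ, (E μ).trace = 1) {σ : Matrix n n 𝕜}
    (hσ : ‖σ‖ ≤ 1) : ‖((List.ofFn E).reverse.prod * σ).trace‖ ≤ 1 := by
  have hnorm : ∀ A ∈ (List.ofFn fun i => E i.succ).reverse, ‖A‖ ≤ 1 := by
    simp only [List.mem_reverse, List.mem_ofFn]
    rintro _ ⟨i, rfl⟩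
    simpa [hEtr] using (hE i.succ).l2_opNorm_le_trace
  rw [List.ofFn_succ, List.reverse_cons, List.prod_append, List.prod_singleton, trace_mul_cycle]
  calc ‖((σ * (List.ofFn fun i => E i.succ).reverse.prod) * E 0).trace‖
      ≤ ‖σ * (List.ofFn fun i => E i.succ).reverse.prod‖ * RCLike.re (E 0).trace :=
        (hE 0).norm_trace_mul_le _
    _ ≤ 1 := by
        rw [hEtr, RCLike.one_re, mul_one]
        exact (norm_mul_list_prod_le σ hnorm).trans hσ

end L2OpNorm

end Matrix

theorem mul_cyclicShift_apply {d n : ℕ} [NeZero n] (M : Matrix (Fin n → Fin d) (Fin n → Fin d) ℂ)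
    (i k : Fin n → Fin d) : (M * cyclicShift d n) i k = M i (fun μ => k (μ - 1)) := by
  rw [mul_apply, Finset.sum_eq_single (fun μ => k (μ - 1))]
  · simp [cyclicShift]
  · intro j _ hj
    simp [cyclicShift, ← funext_iff, hj]
  · simp

theorem trace_tensPow_mul_cyclicShift_mul_tensPow {d n : ℕ} [NeZero n]
    (B A : Fin n → Matrix (Fin d) (Fin d) ℂ) :
    (tensPow B * cyclicShift d n * tensPow A).trace =
      ∑ k : Fin n → Fin d, ∏ μ, (A μ * B μ) (k μ) (k (μ - 1)) := by
  simp only [trace, diag_apply, mul_apply (M := _ * _), mul_cyclicShift_apply, tensPow, of_apply]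
  rw [Finset.sum_comm]
  refine Finset.sum_congr rfl fun k _ => ?_
  simp only [mul_apply, Fintype.prod_sum, ← Finset.prod_mul_distrib]
  exact Finset.sum_congr rfl fun i _ => Finset.prod_congr rfl fun μ _ => mul_comm _ _

theorem nonidentical_copies_general_general {d : ℕ} (n : ℕ) [NeZero n]
    (ψ : Fin d → ℂ) (hψ : star ψ ⬝ᵥ ψ = 1)
    (lam : Fin n → ℝ) (hlam : ∀ μ, lam μ ∈ Set.Icc (0 : ℝ) 1)
    (E : Fin n → Matrix (Fin d) (Fin d) ℂ)
    (hE : ∀ μ, (E μ).PosSemidef) (hEtr : ∀ μ, (E μ).trace = 1)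
    (hEψ : ∀ μ, (E μ).mulVec ψ = 0)
    (σ : Matrix (Fin d) (Fin d) ℂ)
    (hσ : ‖Matrix.toEuclideanCLM (𝕜 := ℂ) σ‖ ≤ 1) :
    let ρ : Fin n → Matrix (Fin d) (Fin d) ℂ := fun μ =>
      (lam μ : ℂ) • vecMulVec ψ (star ψ) + ((1 : ℂ) - (lam μ : ℂ)) • E μ
    ‖(tensPow (fun μ : Fin n => if (μ : ℕ) = 0 then σ else 1) *
          cyclicShift d n * tensPow ρ).trace -
        (∏ μ, (lam μ : ℂ)) * (star ψ ⬝ᵥ σ.mulVec ψ)‖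
      ≤ ∏ μ, (1 - lam μ) := by
  intro ρ
  obtain ⟨m, rfl⟩ := Nat.exists_eq_succ_of_ne_zero (NeZero.ne n)
  have hρ : (List.ofFn ρ).reverse.prod = (∏ μ, (lam μ : ℂ)) • vecMulVec ψ (star ψ) +
      (∏ μ, ((1 : ℂ) - lam μ)) • (List.ofFn E).reverse.prod := by
    simp only [ρ, List.ofFn_eq_map, ← List.map_reverse]
    rw [list_prod_map_smul_add_smul (vecMulVec_star_mul_self hψ)
      (fun μ => vecMulVec_star_mul_eq_zero (hE μ).1 (hEψ μ))
      (fun μ => mul_vecMulVec_star_eq_zero (hEψ μ)) _ _ (by simp)]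
    simp [List.map_reverse, List.prod_reverse, ← Fin.prod_univ_def]
  have hcyc := trace_tensPow_mul_cyclicShift_mul_tensPow
    (fun μ : Fin (m + 1) => if (μ : ℕ) = 0 then σ else 1) ρ
  rw [sum_prod_apply_sub_one_eq_trace, List.prod_reverse_ofFn_mul _ _
      (fun μ hμ => if_neg (Fin.val_ne_zero_iff.mpr hμ)), hρ, add_mul, trace_add,
    smul_mul_assoc, smul_mul_assoc, trace_smul, trace_smul, trace_vecMulVec_star_mul,
    Fin.val_zero, if_pos rfl] at hcyc
  have hprod_nonneg : 0 ≤ ∏ μ, (1 - lam μ) :=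
    Finset.prod_nonneg fun μ _ => sub_nonneg.mpr (hlam μ).2
  have hcast : ∏ μ, ((1 : ℂ) - lam μ) = ((∏ μ, (1 - lam μ) : ℝ) : ℂ) := by push_cast; rfl
  rw [hcyc, smul_eq_mul, smul_eq_mul, add_sub_cancel_left, norm_mul, hcast, Complex.norm_real,
    Real.norm_of_nonneg hprod_nonneg]
  exact mul_le_of_le_one_right hprod_nonneg (norm_trace_list_prod_mul_le_one hE hEtr hσ)

/-- general case of the lemma on non-identical copies: for copies
`ρ_μ = λ_μ|ψ⟩⟨ψ| + (1−λ_μ)E_μ` with the same dominant unit eigenvector `ψ`, where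
each error part `E_μ` is Hermitian PSD with `Tr E_μ = 1` and `E_μ ψ = 0`, and `σ`
has operator norm at most `1`:
`|Tr[(σ ⊗ Id^{⊗(n−1)}) S_n (ρ_1 ⊗ ⋯ ⊗ ρ_n)] − (∏_μ λ_μ)⟨ψ,σψ⟩| ≤ ∏_μ (1−λ_μ)`. -/
theorem nonidentical_copies_general {d : ℕ} (n : ℕ) [NeZero n] (hn : 2 ≤ n)
    (ψ : Fin d → ℂ) (hψ : star ψ ⬝ᵥ ψ = 1)
    (lam : Fin n → ℝ) (hlam : ∀ μ, lam μ ∈ Set.Icc (0 : ℝ) 1)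
    (E : Fin n → Matrix (Fin d) (Fin d) ℂ)
    (hE : ∀ μ, (E μ).PosSemidef) (hEtr : ∀ μ, (E μ).trace = 1)
    (hEψ : ∀ μ, (E μ).mulVec ψ = 0)
    (σ : Matrix (Fin d) (Fin d) ℂ)
    (hσ : ‖Matrix.toEuclideanCLM (𝕜 := ℂ) σ‖ ≤ 1) :
    let ρ : Fin n → Matrix (Fin d) (Fin d) ℂ := fun μ =>
      (lam μ : ℂ) • vecMulVec ψ (star ψ) + ((1 : ℂ) - (lam μ : ℂ)) • E μ
    ‖(tensPow (fun μ : Fin n => if (μ : ℕ) = 0 then σ else 1) *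
          cyclicShift d n * tensPow ρ).trace -
        (∏ μ, (lam μ : ℂ)) * (star ψ ⬝ᵥ σ.mulVec ψ)‖
      ≤ ∏ μ, (1 - lam μ) :=
  nonidentical_copies_general_general n ψ hψ lam hlam E hE hEtr hEψ σ hσ
end
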